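/- arXiv:2403.17950 — 2 statements merged into one kernel-verified Lean document; each statement's English description precedes it below -/
import Mathlib

section
/- For every connected graph G on N ≥ 2 vertices, the decreasing degree sequence of the N-chain (path graph), namely (2,…,2,1,1), is generalized-Lorenz majorized by the decreasing degree sequence of G; i.e., the N-chain is the minimum connected network under this partial order. -/
/-- Generalized (non-normalized) Lorenz majorization of `N`-arrays of naturals. -/
def GenLorenzMaj {N : ℕ} (X Y : Fin N → ℕ) : Prop :=
  ∀ j : Fin N, ∑ k ∈ Finset.Iic j, X k ≤ ∑ k ∈ Finset.Iic j, Y k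

/-- The decreasing degree sequence of the `N`-chain (path graph):
`N - 2` twos followed by two ones. -/
def chainSeq (N : ℕ) : Fin N → ℕ := fun j => if (j : ℕ) < N - 2 then 2 else 1

/-! A connected graph on `N` vertices has all degrees `≥ 1` and degree sum `≥ 2 (N - 1)`, while the
`j`-th partial sum of the chain sequence is at most both `2 (j + 1)` and `(j + 1) + (N - 2)`.
If the `j`-th sorted degree is `≥ 2`, so are all earlier ones, which gives the first bound;
otherwise every later degree equals `1`, and removing them from the total leaves the second. -/

open Finset

section LorenzPartialSums

variable {N : ℕ}

lemma chainSeq_le_two (k : Fin N) : chainSeq N k ≤ 2 := by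
  unfold chainSeq; split_ifs <;> omega

lemma sum_Iic_chainSeq_le_two_mul (j : Fin N) : ∑ k ∈ Iic j, chainSeq N k ≤ 2 * (j + 1) := by
  simpa [Fin.card_Iic, mul_comm] using sum_le_card_nsmul (Iic j) _ _ fun k _ ↦ chainSeq_le_two k

lemma sum_Iic_chainSeq_le_add (j : Fin N) :
    ∑ k ∈ Iic j, chainSeq N k ≤ (j + 1) + (N - 2) :=
  calc ∑ k ∈ Iic j, chainSeq N k
      = ∑ k ∈ Iic j, (1 + if (k : ℕ) < N - 2 then 1 else 0) := by
        refine sum_congr rfl fun k _ ↦ ?_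
        unfold chainSeq; split_ifs <;> rfl
    _ = (j + 1) + #((Iic j).filter fun k : Fin N ↦ (k : ℕ) < N - 2) := by
        rw [sum_add_distrib, sum_const, Fin.card_Iic, smul_eq_mul, mul_one, sum_boole, Nat.cast_id]
    _ ≤ (j + 1) + (N - 2) := by
        grw [filter_subset_filter _ (subset_univ (Iic j)), Fin.card_filter_val_lt]
        omega

variable {d : Fin N → ℕ}

lemma Antitone.two_mul_le_sum_Iic (hd : Antitone d) {j : Fin N} (hj : 2 ≤ d j) :
    2 * (j + 1) ≤ ∑ k ∈ Iic j, d k := by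
  simpa [Fin.card_Iic, mul_comm] using
    card_nsmul_le_sum (Iic j) d 2 fun k hk ↦ hj.trans (hd (mem_Iic.1 hk))

lemma Antitone.sum_eq_sum_Iic_add (hd : Antitone d) (hpos : ∀ k, 1 ≤ d k) {j : Fin N}
    (hj : d j ≤ 1) : ∑ k, d k = ∑ k ∈ Iic j, d k + (N - (j + 1)) := by
  have htail : ∑ k ∈ (Iic j)ᶜ, d k = N - (j + 1) := by
    have hone : ∀ k ∈ (Iic j)ᶜ, d k = 1 := fun k hk ↦
      le_antisymm ((hd (le_of_lt (by simpa using hk))).trans hj) (hpos k)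
    rw [sum_congr rfl hone, sum_const, smul_eq_mul, mul_one, card_compl, Fin.card_Iic,
      Fintype.card_fin]
  rw [← sum_add_sum_compl (Iic j) d, htail]

theorem genLorenzMaj_chainSeq_of_antitone (hd : Antitone d) (hpos : ∀ k, 1 ≤ d k)
    (hsum : 2 * (N - 1) ≤ ∑ k, d k) : GenLorenzMaj (chainSeq N) d := by
  intro j
  rcases le_or_gt 2 (d j) with hj | hj
  · exact (sum_Iic_chainSeq_le_two_mul j).trans (hd.two_mul_le_sum_Iic hj)
  · have hsplit := hd.sum_eq_sum_Iic_add hpos (j := j) (by omega)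
    -- needed only when `N = 1`, where `hsum` is vacuous
    have hhead : d j ≤ ∑ k ∈ Iic j, d k :=
      single_le_sum (fun k _ ↦ Nat.zero_le (d k)) (mem_Iic.2 le_rfl)
    have hchain := sum_Iic_chainSeq_le_add j
    have hj1 := hpos j
    omega

end LorenzPartialSums

lemma SimpleGraph.Connected.two_mul_card_sub_one_le_sum_degree {V : Type*} [Fintype V]
    {G : SimpleGraph V} [DecidableRel G.Adj] (hG : G.Connected) :
    2 * (Fintype.card V - 1) ≤ ∑ v, G.degree v := by
  classical
  have hedges := hG.card_vert_le_card_edgeSet_add_one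
  rw [Nat.card_eq_fintype_card, Nat.card_eq_fintype_card, ← edgeFinset_card] at hedges
  rw [sum_degrees_eq_twice_card_edges]
  omega

theorem chain_is_minimum_general {V : Type*} [Fintype V]
    (G : SimpleGraph V) [DecidableRel G.Adj]
    (N : ℕ) (hN : N = Fintype.card V) (h2 : 2 ≤ N) (hconn : G.Connected)
    (dG : Fin N → ℕ) (hGanti : Antitone dG)
    (hGseq : Multiset.map dG Finset.univ.val
      = Multiset.map (fun v => G.degree v) (Finset.univ : Finset V).val) :
    GenLorenzMaj (chainSeq N) dG := by
  have : Nontrivial V := Fintype.one_lt_card_iff_nontrivial.1 (hN ▸ h2)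
  refine genLorenzMaj_chainSeq_of_antitone hGanti (fun k ↦ ?_) ?_
  · obtain ⟨v, -, hv⟩ := Multiset.mem_map.1 (hGseq ▸ Multiset.mem_map_of_mem dG (mem_univ_val k))
    exact hv ▸ hconn.preconnected.degree_pos_of_nontrivial v
  · rw [sum_eq_multiset_sum, hGseq, ← sum_eq_multiset_sum, hN]
    exact hconn.two_mul_card_sub_one_le_sum_degree

theorem chain_is_minimum {V : Type*} [Fintype V] [DecidableEq V]
    (G : SimpleGraph V) [DecidableRel G.Adj]
    (N : ℕ) (hN : N = Fintype.card V) (h2 : 2 ≤ N) (hconn : G.Connected)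
    (dG : Fin N → ℕ) (hGanti : Antitone dG)
    (hGseq : Multiset.map dG Finset.univ.val
      = Multiset.map (fun v => G.degree v) (Finset.univ : Finset V).val) :
    GenLorenzMaj (chainSeq N) dG :=
  chain_is_minimum_general G N hN h2 hconn dG hGanti hGseq
end

section
/- The sequence of M-spiders S_M (with N = 3M nodes) is DSWA but not DSWMd: its average degree (M²+3M)/(3M) satisfies (average degree)/ln(3M) → ∞, while its median degree equals 1 for all M ≥ 2. -/
/-- The `M`-spider: a complete graph on the `M` hub vertices `(0, i)`, each hub
`(0, i)` additionally adjacent to the two pendant vertices `(1, i)` and `(2, i)`;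
in total `N = 3M` vertices. -/
def spider (M : ℕ) : SimpleGraph (Fin 3 × Fin M) :=
  SimpleGraph.fromRel (fun a b => (a.1 = 0 ∧ b.1 = 0) ∨ (a.1 = 0 ∧ a.2 = b.2))

instance (M : ℕ) : DecidableRel (spider M).Adj := fun a b =>
  decidable_of_iff _ (SimpleGraph.fromRel_adj _ a b).symm

/-- The median of a (sorted) `N`-array: the middle entry for odd `N`,
the average of the two middle entries for even `N` (junk value `0` for `N = 0`). -/
noncomputable def medOf {N : ℕ} (d : Fin N → ℕ) : ℝ :=
  if h : 0 < N then
    if N % 2 = 1 then (d ⟨N / 2, by omega⟩ : ℝ)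
    else ((d ⟨N / 2 - 1, by omega⟩ : ℝ) + (d ⟨N / 2, by omega⟩ : ℝ)) / 2
  else 0

/- Each of the `M` hubs has degree `M + 1` and each of the `2M` pendants degree `1`, so the average
degree `(M + 3) / 3` grows linearly and beats `log (3M)`. Only `M` of the `3M` sorted degrees exceed
`1`, so every entry from position `M` on is `1`; for `M ≥ 2` both middle positions
`⌊3M/2⌋ - 1` and `⌊3M/2⌋` are at least `M`. -/

open Filter Finset Topology

lemma card_filter_comp_eq_of_map_eq {α β γ : Type*} [Fintype α] [Fintype β] {f : α → γ}
    {g : β → γ} (h : Multiset.map f univ.val = Multiset.map g univ.val) (p : γ → Prop)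
    [DecidablePred p] : #{a | p (f a)} = #{b | p (g b)} := by
  simpa [Multiset.filter_map, card_def, filter_val] using
    congrArg (fun s => Multiset.card (s.filter p)) h

lemma Antitone.le_of_card_filter_lt_le {N : ℕ} {α : Type*} [LinearOrder α] {d : Fin N → α}
    (hd : Antitone d) {c : α} {m : ℕ} (hm : #{k | c < d k} ≤ m) {k : Fin N} (hk : m ≤ k) :
    d k ≤ c := by
  by_contra! hlt
  have hsub : Iic k ⊆ ({k | c < d k} : Finset (Fin N)) := fun j hj =>
    mem_filter.2 ⟨mem_univ j, hlt.trans_le (hd (mem_Iic.1 hj))⟩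
  have := (card_le_card hsub).trans hm
  rw [Fin.card_Iic] at this
  omega

lemma medOf_eq_of_forall_half_sub_one_le {N : ℕ} {d : Fin N → ℕ} {c : ℕ} (hN : 0 < N)
    (h : ∀ k : Fin N, N / 2 - 1 ≤ k → d k = c) : medOf d = c := by
  rw [medOf, dif_pos hN, h _ (by simp), h _ (by simp)]
  split_ifs <;> ring

lemma tendsto_div_log_atTop : Tendsto (fun x : ℝ => x / Real.log x) atTop atTop := by
  have hzero : Tendsto (fun x : ℝ => Real.log x / x) atTop (𝓝 0) := by
    simpa using Real.tendsto_pow_log_div_mul_add_atTop 1 0 1 one_ne_zero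
  have hpos : ∀ᶠ x : ℝ in atTop, Real.log x / x ∈ Set.Ioi 0 := by
    filter_upwards [eventually_gt_atTop 1] with x hx
    exact div_pos (Real.log_pos hx) (by linarith)
  simpa [Pi.inv_def, inv_div] using
    (tendsto_nhdsWithin_iff.2 ⟨hzero, hpos⟩).inv_tendsto_nhdsGT_zero

namespace spider

variable {M : ℕ}

lemma neighborFinset_hub (i : Fin M) :
    (spider M).neighborFinset (0, i) = {0} ×ˢ univ.erase i ∪ univ.erase 0 ×ˢ {i} := by
  ext ⟨j, k⟩
  rw [SimpleGraph.mem_neighborFinset, spider, SimpleGraph.fromRel_adj]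
  simp [Prod.ext_iff]
  grind

lemma degree_hub (i : Fin M) : (spider M).degree (0, i) = M + 1 := by
  have hM : 0 < M := i.pos
  have hdisj : Disjoint ({0} ×ˢ univ.erase i) (univ.erase (0 : Fin 3) ×ˢ {i}) :=
    disjoint_product.2 (.inl (by simp))
  rw [← SimpleGraph.card_neighborFinset_eq_degree, neighborFinset_hub,
    card_union_of_disjoint hdisj, card_product, card_product]
  simp
  omega

lemma neighborFinset_pendant {j : Fin 3} (hj : j ≠ 0) (i : Fin M) :
    (spider M).neighborFinset (j, i) = {(0, i)} := by
  ext ⟨k, l⟩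
  rw [SimpleGraph.mem_neighborFinset, spider, SimpleGraph.fromRel_adj]
  simp [Prod.ext_iff, hj]
  grind

lemma degree_pendant {j : Fin 3} (hj : j ≠ 0) (i : Fin M) : (spider M).degree (j, i) = 1 := by
  rw [← SimpleGraph.card_neighborFinset_eq_degree, neighborFinset_pendant hj,
    card_singleton]

lemma one_le_degree (v : Fin 3 × Fin M) : 1 ≤ (spider M).degree v := by
  obtain ⟨j, i⟩ := v
  by_cases hj : j = 0
  · subst hj; simp [degree_hub]
  · simp [degree_pendant hj]

lemma card_filter_one_lt_degree : #{v | 1 < (spider M).degree v} = M := by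
  have hhubs : ({v | 1 < (spider M).degree v} : Finset _) = {0} ×ˢ univ := by
    ext ⟨j, i⟩
    by_cases hj : j = 0
    · subst hj; simpa [degree_hub] using i.pos
    · simp [degree_pendant hj, Ne.symm hj]
  simp [hhubs]

lemma sum_degree (M : ℕ) : ∑ v, (spider M).degree v = M ^ 2 + 3 * M := by
  simp only [Fintype.sum_prod_type, Fin.sum_univ_three, degree_hub,
    degree_pendant (by decide : (1 : Fin 3) ≠ 0), degree_pendant (by decide : (2 : Fin 3) ≠ 0),
    sum_const, card_univ, Fintype.card_fin, smul_eq_mul]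
  ring

lemma average_degree (hM : M ≠ 0) :
    1 / (3 * (M : ℝ)) * ∑ v, ((spider M).degree v : ℝ) = (M + 3) / 3 := by
  rw [← Nat.cast_sum, sum_degree]
  field_simp
  push_cast
  ring

lemma tendsto_average_degree_div_log :
    Tendsto (fun M : ℕ => (1 / (3 * (M : ℝ)) * ∑ v, ((spider M).degree v : ℝ)) /
      Real.log (3 * M)) atTop atTop := by
  have h3M : Tendsto (fun M : ℕ => 3 * (M : ℝ)) atTop atTop :=
    tendsto_natCast_atTop_atTop.const_mul_atTop (by norm_num)
  refine tendsto_atTop_mono' _ ?_ ((tendsto_div_log_atTop.comp h3M).const_mul_atTop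
    (by norm_num : (0 : ℝ) < 1 / 9))
  filter_upwards [eventually_ge_atTop 1] with M hM
  have hlog : 0 < Real.log (3 * (M : ℝ)) := Real.log_pos (by norm_cast; omega)
  rw [Function.comp_apply, average_degree (by omega), mul_div_assoc']
  gcongr
  linarith

lemma median_degree {d : Fin (3 * M) → ℕ} (hd : Antitone d)
    (hseq : Multiset.map d univ.val = Multiset.map (fun v => (spider M).degree v) univ.val)
    (hM : 2 ≤ M) : medOf d = 1 := by
  rw [← Nat.cast_one]
  refine medOf_eq_of_forall_half_sub_one_le (by omega) fun k hk => le_antisymm ?_ ?_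
  · refine hd.le_of_card_filter_lt_le (m := M) ?_ (by omega)
    rw [card_filter_comp_eq_of_map_eq hseq, card_filter_one_lt_degree]
  · obtain ⟨v, -, hv⟩ :=
      Multiset.mem_map.1 (hseq ▸ Multiset.mem_map_of_mem d (mem_univ_val k))
    exact hv ▸ one_le_degree v

end spider

theorem spiders_DSWA_not_DSWMd
    (d : ∀ M : ℕ, Fin (3 * M) → ℕ) (hanti : ∀ M, Antitone (d M))
    (hseq : ∀ M, Multiset.map (d M) Finset.univ.val
      = Multiset.map (fun v => (spider M).degree v)
          (Finset.univ : Finset (Fin 3 × Fin M)).val) :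
    (∀ M : ℕ, ∑ v, (spider M).degree v = M ^ 2 + 3 * M) ∧
    Filter.Tendsto
      (fun M : ℕ => ((1 / (3 * (M : ℝ))) * ∑ v, ((spider M).degree v : ℝ))
        / Real.log (3 * (M : ℝ)))
      Filter.atTop Filter.atTop ∧
    (∀ M : ℕ, 2 ≤ M → medOf (d M) = 1) :=
  ⟨spider.sum_degree, spider.tendsto_average_degree_div_log,
    fun M hM => spider.median_degree (hanti M) (hseq M) hM⟩
end
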